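/- (Elimination of V̂) Let α ∈ ℝ. If Û ∈ ℝ^{n×(n−1)}, V̂ ∈ ℝ^{(n−1)×n}, F̂ ∈ ℝ^{n×(n−1)} satisfy Û(Λ² + (h²α/6)Σ) − Γᵀ V̂ Γᵀ = h² F̂ together with the transformed divergence-free constraint Γ Û Σ + Σ V̂ Γᵀ = 0, then Û satisfies the decoupled equation Û(Λ² + (h²α/6)Σ) + Γᵀ Σ⁻¹ Γ Û Σ = h² F̂. -/
import Mathlib


open Matrix Real

/-- `τ_i = -2 sin(iπ/(2n))`. -/
noncomputable def tau (n i : ℕ) : ℝ := -2 * Real.sin ((i : ℝ) * Real.pi / (2 * n))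

/-- `σ_i = 2(2 + cos(iπ/n))`. -/
noncomputable def sigma (n i : ℕ) : ℝ := 2 * (2 + Real.cos ((i : ℝ) * Real.pi / n))

/-- `Λ = diag(τ_1, …, τ_{n-1})`. -/
noncomputable def Lam (n : ℕ) : Matrix (Fin (n - 1)) (Fin (n - 1)) ℝ :=
  Matrix.diagonal fun j => tau n ((j : ℕ) + 1)

/-- `Σ = diag(σ_1, …, σ_{n-1})`. -/
noncomputable def Sig (n : ℕ) : Matrix (Fin (n - 1)) (Fin (n - 1)) ℝ :=
  Matrix.diagonal fun j => sigma n ((j : ℕ) + 1)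

/-- `Γ = [0, Λ] ∈ ℝ^{(n-1)×n}` (zero first column). -/
noncomputable def Gam (n : ℕ) : Matrix (Fin (n - 1)) (Fin n) ℝ :=
  Matrix.of fun k l => if (l : ℕ) = (k : ℕ) + 1 then tau n ((k : ℕ) + 1) else 0

/-- Elimination of `V̂`: from the transformed first Maxwell equation together with the
transformed divergence-free constraint, `Û` satisfies the decoupled equation
`Û(Λ² + (h²α/6)Σ) + Γᵀ Σ⁻¹ Γ Û Σ = h² F̂`. -/
theorem stmt12 (n : ℕ) (hn : 2 ≤ n) (h : ℝ) (hh : h = 1 / n) (α : ℝ)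
    (Uhat : Matrix (Fin n) (Fin (n - 1)) ℝ)
    (Vhat : Matrix (Fin (n - 1)) (Fin n) ℝ)
    (Fhat : Matrix (Fin n) (Fin (n - 1)) ℝ)
    (h1 : Uhat * (Lam n * Lam n + (h ^ 2 * α / 6) • Sig n) - (Gam n)ᵀ * Vhat * (Gam n)ᵀ =
      h ^ 2 • Fhat)
    (hdiv : Gam n * Uhat * Sig n + Sig n * Vhat * (Gam n)ᵀ = 0) :
    Uhat * (Lam n * Lam n + (h ^ 2 * α / 6) • Sig n) +
      (Gam n)ᵀ * (Sig n)⁻¹ * Gam n * Uhat * Sig n = h ^ 2 • Fhat := by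
  have hdet : IsUnit (Sig n).det := by
    rw [Sig, Matrix.det_diagonal]
    refine isUnit_iff_ne_zero.2 (Finset.prod_ne_zero_iff.2 fun j _ => ?_)
    have hc := Real.neg_one_le_cos (((j : ℕ) + 1 : ℝ) * Real.pi / n)
    unfold sigma
    intro h0
    push_cast at h0
    nlinarith
  have hinv : (Sig n)⁻¹ * Sig n = 1 := Matrix.nonsing_inv_mul _ hdet
  have h2 : Sig n * Vhat * (Gam n)ᵀ = -(Gam n * Uhat * Sig n) := by
    have := hdiv
    rw [add_comm] at this
    exact eq_neg_of_add_eq_zero_left this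
  have key : (Gam n)ᵀ * Vhat * (Gam n)ᵀ = -((Gam n)ᵀ * (Sig n)⁻¹ * Gam n * Uhat * Sig n) := by
    calc (Gam n)ᵀ * Vhat * (Gam n)ᵀ
        = (Gam n)ᵀ * ((Sig n)⁻¹ * Sig n) * Vhat * (Gam n)ᵀ := by rw [hinv, Matrix.mul_one]
      _ = (Gam n)ᵀ * (Sig n)⁻¹ * (Sig n * Vhat * (Gam n)ᵀ) := by
          simp only [Matrix.mul_assoc]
      _ = (Gam n)ᵀ * (Sig n)⁻¹ * (-(Gam n * Uhat * Sig n)) := by rw [h2]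
      _ = -((Gam n)ᵀ * (Sig n)⁻¹ * Gam n * Uhat * Sig n) := by
          simp only [Matrix.mul_neg, Matrix.mul_assoc]
  rw [← h1, key, sub_neg_eq_add]
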